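/- arXiv:2107.05554 — 3 statements merged into one kernel-verified Lean document; each statement's English description precedes it below -/
import Mathlib

section
/- Corrupted-step noise bound: under the hypotheses of Lemma 1, if index i lies in the q-quantile set (i.e., |⟨x_k, a_i⟩ - b_i| ≤ Q where Q is the q-quantile of the residuals), then the update vector v = (b_i - ⟨x_k, a_i⟩)a_i satisfies ‖v‖² ≤ σ_max(A)² ‖x_k - x‖² / (m(1 - q - β)). -/
open RealInnerProductSpace Finset

/-- The largest singular value of the matrix with rows `a i`. -/
noncomputable def sigmaMax {m n : ℕ} (a : Fin m → EuclideanSpace ℝ (Fin n)) : ℝ :=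
  sSup {t : ℝ | ∃ y : EuclideanSpace ℝ (Fin n), ‖y‖ = 1 ∧
    t = Real.sqrt (∑ i, ⟪a i, y⟫ ^ 2)}

/-!
Among the at least `(1 - q) m` rows whose residual is at least `Q`, at most `β m` are corrupted,
so at least `(1 - q - β) m` rows satisfy `Q ≤ |⟪a j, xk - x⟫|`. Summing squares over them gives
`(1 - q - β) m Q² ≤ ‖A (xk - x)‖² ≤ σ_max(A)² ‖xk - x‖²`, and `‖v‖ = |b i - ⟪a i, xk⟫| ≤ Q`.
-/

section SigmaMax

variable {m n : ℕ} (a : Fin m → EuclideanSpace ℝ (Fin n))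

lemma sum_inner_sq_le_sum_norm_sq {y : EuclideanSpace ℝ (Fin n)} (hy : ‖y‖ = 1) :
    ∑ j, ⟪a j, y⟫ ^ 2 ≤ ∑ j, ‖a j‖ ^ 2 := by
  refine sum_le_sum fun j _ => sq_le_sq.mpr ?_
  simpa [hy] using abs_real_inner_le_norm (a j) y

lemma sum_inner_sq_le_sigmaMax_sq_of_norm_eq_one {y : EuclideanSpace ℝ (Fin n)} (hy : ‖y‖ = 1) :
    ∑ j, ⟪a j, y⟫ ^ 2 ≤ sigmaMax a ^ 2 := by
  have hbdd : BddAbove {t : ℝ | ∃ z : EuclideanSpace ℝ (Fin n), ‖z‖ = 1 ∧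
      t = Real.sqrt (∑ i, ⟪a i, z⟫ ^ 2)} := by
    refine ⟨Real.sqrt (∑ j, ‖a j‖ ^ 2), ?_⟩
    rintro t ⟨z, hz, rfl⟩
    exact Real.sqrt_le_sqrt (sum_inner_sq_le_sum_norm_sq a hz)
  have hle : Real.sqrt (∑ j, ⟪a j, y⟫ ^ 2) ≤ sigmaMax a := le_csSup hbdd ⟨y, hy, rfl⟩
  exact (Real.sqrt_le_left ((Real.sqrt_nonneg _).trans hle)).mp hle

lemma sum_inner_sq_le_sigmaMax_sq_mul_norm_sq (y : EuclideanSpace ℝ (Fin n)) :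
    ∑ j, ⟪a j, y⟫ ^ 2 ≤ sigmaMax a ^ 2 * ‖y‖ ^ 2 := by
  rcases eq_or_ne y 0 with rfl | hy
  · simp
  have hunit := sum_inner_sq_le_sigmaMax_sq_of_norm_eq_one a (norm_smul_inv_norm (𝕜 := ℝ) hy)
  simp only [real_inner_smul_right, mul_pow, ← Finset.mul_sum, inv_pow] at hunit
  rwa [inv_mul_le_iff₀ (by positivity), mul_comm] at hunit

end SigmaMax

lemma mul_card_le_card_sdiff {α : Type*} [DecidableEq α] {s t : Finset α} {q β m : ℝ}
    (hs : (1 - q) * m ≤ #s) (ht : (#t : ℝ) ≤ β * m) :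
    (1 - q - β) * m ≤ #(s \ t) := by
  have : (#s : ℝ) ≤ #(s \ t) + #t := by exact_mod_cast card_le_card_sdiff_add_card
  linarith

lemma mul_sq_quantile_le_sigmaMax_sq_mul {m n : ℕ} (a : Fin m → EuclideanSpace ℝ (Fin n))
    (x xk : EuclideanSpace ℝ (Fin n)) (bt b : Fin m → ℝ) (q β Q : ℝ)
    (hbt : ∀ j, ⟪a j, x⟫ = bt j)
    (hcorr : ((univ.filter fun j => b j ≠ bt j).card : ℝ) ≤ β * m)
    (hQ : 0 ≤ Q)
    (hquant : (1 - q) * m ≤ ((univ.filter fun j => Q ≤ |⟪a j, xk⟫ - b j|).card : ℝ)) :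
    (1 - q - β) * m * Q ^ 2 ≤ sigmaMax a ^ 2 * ‖xk - x‖ ^ 2 := by
  set T := (univ.filter fun j => Q ≤ |⟪a j, xk⟫ - b j|) \ univ.filter fun j => b j ≠ bt j
  have hT : ∀ j ∈ T, Q ^ 2 ≤ ⟪a j, xk - x⟫ ^ 2 := by
    intro j hj
    simp only [T, mem_sdiff, mem_filter, mem_univ, true_and, not_not] at hj
    have hres : Q ≤ |⟪a j, xk - x⟫| := by rw [inner_sub_right, hbt, ← hj.2]; exact hj.1
    simpa only [sq_abs] using pow_le_pow_left₀ hQ hres 2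
  calc (1 - q - β) * m * Q ^ 2 ≤ #T * Q ^ 2 := by
        gcongr
        exact mul_card_le_card_sdiff hquant hcorr
    _ ≤ ∑ j ∈ T, ⟪a j, xk - x⟫ ^ 2 := by
        simpa [nsmul_eq_mul] using card_nsmul_le_sum T _ _ hT
    _ ≤ ∑ j, ⟪a j, xk - x⟫ ^ 2 :=
        sum_le_sum_of_subset_of_nonneg (subset_univ T) fun _ _ _ => sq_nonneg _
    _ ≤ sigmaMax a ^ 2 * ‖xk - x‖ ^ 2 := sum_inner_sq_le_sigmaMax_sq_mul_norm_sq a _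

theorem corrupted_step_noise_bound_general {m n : ℕ} (a : Fin m → EuclideanSpace ℝ (Fin n))
    (x xk : EuclideanSpace ℝ (Fin n)) (bt b : Fin m → ℝ) (q β Q : ℝ) (i : Fin m)
    (ha : ∀ j, ‖a j‖ = 1)
    (hbt : ∀ j, ⟪a j, x⟫ = bt j)
    (hcorr : ((univ.filter fun j => b j ≠ bt j).card : ℝ) ≤ β * m)
    (hq1 : q < 1 - β)
    (hquant : (1 - q) * m ≤ ((univ.filter fun j => Q ≤ |⟪a j, xk⟫ - b j|).card : ℝ))
    (hi : |⟪a i, xk⟫ - b i| ≤ Q) :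
    ‖(b i - ⟪a i, xk⟫) • a i‖ ^ 2 ≤
      sigmaMax a ^ 2 * ‖xk - x‖ ^ 2 / (m * (1 - q - β)) := by
  have hm : (0 : ℝ) < m := by exact_mod_cast i.pos
  have hQ : 0 ≤ Q := (abs_nonneg _).trans hi
  have hv : ‖(b i - ⟪a i, xk⟫) • a i‖ ≤ Q := by
    rwa [norm_smul, ha i, mul_one, Real.norm_eq_abs, abs_sub_comm]
  have hQ_sq := mul_sq_quantile_le_sigmaMax_sq_mul a x xk bt b q β Q hbt hcorr hQ hquant
  have hden : 0 < (m : ℝ) * (1 - q - β) := mul_pos hm (by linarith)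
  rw [le_div_iff₀ hden]
  calc ‖(b i - ⟪a i, xk⟫) • a i‖ ^ 2 * (m * (1 - q - β)) ≤ Q ^ 2 * (m * (1 - q - β)) := by
        gcongr
    _ ≤ sigmaMax a ^ 2 * ‖xk - x‖ ^ 2 := by linarith

/-- corrupted-step noise bound. -/
theorem corrupted_step_noise_bound {m n : ℕ} (a : Fin m → EuclideanSpace ℝ (Fin n))
    (x xk : EuclideanSpace ℝ (Fin n)) (bt b : Fin m → ℝ) (q β Q : ℝ) (i : Fin m)
    (ha : ∀ j, ‖a j‖ = 1)
    (hbt : ∀ j, ⟪a j, x⟫ = bt j)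
    (hβ : 0 ≤ β)
    (hcorr : ((univ.filter fun j => b j ≠ bt j).card : ℝ) ≤ β * m)
    (hq : 0 < q) (hq1 : q < 1 - β)
    (hQ : 0 ≤ Q)
    (hquant : (1 - q) * m ≤ ((univ.filter fun j => Q ≤ |⟪a j, xk⟫ - b j|).card : ℝ))
    (hi : |⟪a i, xk⟫ - b i| ≤ Q) :
    ‖(b i - ⟪a i, xk⟫) • a i‖ ^ 2 ≤
      sigmaMax a ^ 2 * ‖xk - x‖ ^ 2 / (m * (1 - q - β)) :=
  corrupted_step_noise_bound_general a x xk bt b q β Q i ha hbt hcorr hq1 hquant hi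
end

section
/- Cross-term estimate: Let S ⊆ {1,…,m} be nonempty with |⟨x_k, a_i⟩ - b_i| ≤ Q for all i ∈ S, where Q ≤ σ_max ‖x_k - x‖/(√m √(1-q-β)). Then (1/|S|) Σ_{i∈S} 2(b_i - ⟨x_k, a_i⟩)⟨x_k - x, a_i⟩ ≤ (2/√|S|) · σ_max² ‖x_k - x‖² / (√m √(1-q-β)). -/
/-!
Each residual is at most `σ_max ‖xk - x‖ / (√m √(1-q-β))` in absolute value, so the sum is at most
that bound times `∑ i ∈ S, |⟪xk - x, a i⟫|`; Cauchy–Schwarz bounds the latter by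
`√|S| · √(∑ i ∈ S, ⟪a i, xk - x⟫²) ≤ √|S| · σ_max ‖xk - x‖`.
-/

open RealInnerProductSpace Finset

section SigmaMax

variable {m n : ℕ} (a : Fin m → EuclideanSpace ℝ (Fin n))

lemma sigmaMax_nonneg : 0 ≤ sigmaMax a :=
  Real.sSup_nonneg fun _ ⟨_, _, ht⟩ => ht ▸ Real.sqrt_nonneg _

lemma sqrt_sum_inner_sq_smul (c : ℝ) (y : EuclideanSpace ℝ (Fin n)) :
    √(∑ i, ⟪a i, c • y⟫ ^ 2) = |c| * √(∑ i, ⟪a i, y⟫ ^ 2) := by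
  simp_rw [real_inner_smul_right, mul_pow, ← Finset.mul_sum]
  rw [Real.sqrt_mul (sq_nonneg c), Real.sqrt_sq_eq_abs]

lemma bddAbove_sigmaMax_set :
    BddAbove {t : ℝ | ∃ y : EuclideanSpace ℝ (Fin n), ‖y‖ = 1 ∧
      t = Real.sqrt (∑ i, ⟪a i, y⟫ ^ 2)} := by
  refine ⟨√(∑ i, ‖a i‖ ^ 2), ?_⟩
  rintro t ⟨y, hy, rfl⟩
  refine Real.sqrt_le_sqrt (Finset.sum_le_sum fun i _ => ?_)
  have h := abs_real_inner_le_norm (a i) y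
  rw [hy, mul_one] at h
  exact (sq_abs _).symm.trans_le (pow_le_pow_left₀ (abs_nonneg _) h 2)

lemma sqrt_sum_inner_sq_le_sigmaMax_mul_norm (y : EuclideanSpace ℝ (Fin n)) :
    √(∑ i, ⟪a i, y⟫ ^ 2) ≤ sigmaMax a * ‖y‖ := by
  rcases eq_or_ne y 0 with rfl | hy
  · simp
  have hunit := le_csSup (bddAbove_sigmaMax_set a) ⟨‖y‖⁻¹ • y, norm_smul_inv_norm hy, rfl⟩
  rw [sqrt_sum_inner_sq_smul, abs_inv, abs_norm] at hunit
  exact (inv_mul_le_iff₀ (norm_pos_iff.mpr hy)).mp hunit |>.trans_eq (mul_comm _ _)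

lemma sqrt_sum_finset_inner_sq_le_sigmaMax_mul_norm (S : Finset (Fin m))
    (y : EuclideanSpace ℝ (Fin n)) :
    √(∑ i ∈ S, ⟪a i, y⟫ ^ 2) ≤ sigmaMax a * ‖y‖ :=
  (Real.sqrt_le_sqrt (Finset.sum_le_sum_of_subset_of_nonneg S.subset_univ
    fun _ _ _ => sq_nonneg _)).trans (sqrt_sum_inner_sq_le_sigmaMax_mul_norm a y)

end SigmaMax

lemma Finset.sum_abs_le_sqrt_card_mul_sqrt_sum_sq {ι : Type*} (S : Finset ι) (f : ι → ℝ) :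
    ∑ i ∈ S, |f i| ≤ √(#S : ℝ) * √(∑ i ∈ S, f i ^ 2) := by
  rw [← Real.sqrt_mul (Nat.cast_nonneg _)]
  refine le_trans (le_abs_self _) (Real.abs_le_sqrt ?_)
  simpa only [sq_abs] using sq_sum_le_card_mul_sum_sq (s := S) (f := fun i => |f i|)

lemma Finset.sum_mul_le_mul_sum_abs {ι : Type*} (S : Finset ι) (r v : ι → ℝ) (C : ℝ)
    (hr : ∀ i ∈ S, |r i| ≤ C) : ∑ i ∈ S, r i * v i ≤ C * ∑ i ∈ S, |v i| := by
  rw [Finset.mul_sum]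
  refine Finset.sum_le_sum fun i hi => ?_
  calc r i * v i ≤ |r i| * |v i| := by rw [← abs_mul]; exact le_abs_self _
    _ ≤ C * |v i| := mul_le_mul_of_nonneg_right (hr i hi) (abs_nonneg _)

theorem cross_term_estimate_general {m n : ℕ} (a : Fin m → EuclideanSpace ℝ (Fin n))
    (x xk : EuclideanSpace ℝ (Fin n)) (b : Fin m → ℝ) (q β Q : ℝ)
    (S : Finset (Fin m))
    (hres : ∀ i ∈ S, |⟪a i, xk⟫ - b i| ≤ Q)
    (hQ : Q ≤ sigmaMax a * ‖xk - x‖ / (Real.sqrt m * Real.sqrt (1 - q - β))) :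
    (1 / S.card : ℝ) * ∑ i ∈ S, 2 * (b i - ⟪a i, xk⟫) * ⟪xk - x, a i⟫ ≤
      (2 / Real.sqrt S.card) * sigmaMax a ^ 2 * ‖xk - x‖ ^ 2 /
        (Real.sqrt m * Real.sqrt (1 - q - β)) := by
  set D := Real.sqrt m * Real.sqrt (1 - q - β)
  set R := sigmaMax a * ‖xk - x‖
  have hres' : ∀ i ∈ S, |2 * (b i - ⟪a i, xk⟫)| ≤ 2 * (R / D) := fun i hi => by
    rw [abs_mul, abs_two, abs_sub_comm]
    exact mul_le_mul_of_nonneg_left ((hres i hi).trans hQ) zero_le_two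
  have hCS : ∑ i ∈ S, |⟪xk - x, a i⟫| ≤ √(#S : ℝ) * R := by
    simp only [real_inner_comm (a _)]
    exact (S.sum_abs_le_sqrt_card_mul_sqrt_sum_sq _).trans <| mul_le_mul_of_nonneg_left
      (sqrt_sum_finset_inner_sq_le_sigmaMax_mul_norm a S _) (Real.sqrt_nonneg _)
  have hR : 0 ≤ R := mul_nonneg (sigmaMax_nonneg a) (norm_nonneg _)
  calc (1 / #S : ℝ) * ∑ i ∈ S, 2 * (b i - ⟪a i, xk⟫) * ⟪xk - x, a i⟫
      ≤ (1 / #S) * (2 * (R / D) * (√(#S : ℝ) * R)) := by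
        gcongr
        exact (S.sum_mul_le_mul_sum_abs _ _ _ hres').trans
          (mul_le_mul_of_nonneg_left hCS (by positivity))
    _ = 2 * (√(#S : ℝ) / #S) * R ^ 2 / D := by ring
    _ = (2 / √(#S : ℝ)) * sigmaMax a ^ 2 * ‖xk - x‖ ^ 2 / D := by
        rw [Real.sqrt_div_self']; ring

/-- cross-term estimate in the proof of Lemma 2. -/
theorem cross_term_estimate {m n : ℕ} (a : Fin m → EuclideanSpace ℝ (Fin n))
    (x xk : EuclideanSpace ℝ (Fin n)) (b : Fin m → ℝ) (q β Q : ℝ)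
    (S : Finset (Fin m))
    (ha : ∀ i, ‖a i‖ = 1)
    (hq : 0 < q + β) (hqβ : q + β < 1)
    (hS : S.Nonempty)
    (hres : ∀ i ∈ S, |⟪a i, xk⟫ - b i| ≤ Q)
    (hQ : Q ≤ sigmaMax a * ‖xk - x‖ / (Real.sqrt m * Real.sqrt (1 - q - β))) :
    (1 / S.card : ℝ) * ∑ i ∈ S, 2 * (b i - ⟪a i, xk⟫) * ⟪xk - x, a i⟫ ≤
      (2 / Real.sqrt S.card) * sigmaMax a ^ 2 * ‖xk - x‖ ^ 2 /
        (Real.sqrt m * Real.sqrt (1 - q - β)) :=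
  cross_term_estimate_general a x xk b q β Q S hres hQ
end

section
/- Lemma 2 (expected increase from corrupted equations): Under the setup of the quantile Kaczmarz method with unit-norm rows, if S is the set of corrupted equations lying in the q-quantile, S ≠ ∅, |S| ≤ βm, then the average over i ∈ S of ‖x_{k+1} - x‖² (with x_{k+1} = x_k + (b_i - ⟨x_k, a_i⟩)a_i) is at most (1 + (σ_max²/(√|S|√m))·(2/√(1-q-β) + √β/(1-q-β))) · ‖x_k - x‖². -/
open RealInnerProductSpace Finset

/-!
A Kaczmarz step along row `i` changes `‖x_k - x‖²` by `r_i² - 2 r_i ⟪a_i, x_k - x⟫`, where the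
residual satisfies `|r_i| ≤ Q` for `i ∈ S`; by Cauchy–Schwarz the average increase over `S` is
at most `Q² + 2 Q σ_max ‖x_k - x‖ / √|S|`. The quantile itself is controlled by the uncorrupted
rows: at least `(1 - q - β) m` of them have `|⟪a_i, x_k - x⟫| ≥ Q`, so
`Q² (1 - q - β) m ≤ σ_max² ‖x_k - x‖²`. It remains to use `|S| ≤ β m`.
-/

section SigmaMax

variable {m n : ℕ} (a : Fin m → EuclideanSpace ℝ (Fin n))

lemma sum_inner_sq_le_sigmaMax_sq {u : EuclideanSpace ℝ (Fin n)} (hu : ‖u‖ = 1) :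
    ∑ i, ⟪a i, u⟫ ^ 2 ≤ sigmaMax a ^ 2 := by
  rw [← Real.sqrt_le_left (sigmaMax_nonneg a)]
  refine le_csSup ⟨√(∑ i, ‖a i‖ ^ 2), ?_⟩ ⟨u, hu, rfl⟩
  rintro t ⟨z, hz, rfl⟩
  refine Real.sqrt_le_sqrt (sum_le_sum fun i _ => ?_)
  simpa [hz] using sq_le_sq' (neg_le_of_abs_le (abs_real_inner_le_norm (a i) z))
    (real_inner_le_norm (a i) z)

lemma sum_inner_sq_le_sigmaMax_mul_norm_sq (y : EuclideanSpace ℝ (Fin n)) :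
    ∑ i, ⟪a i, y⟫ ^ 2 ≤ (sigmaMax a * ‖y‖) ^ 2 := by
  rcases eq_or_ne y 0 with rfl | hy
  · simp
  have hy' : ‖y‖ ≠ 0 := norm_ne_zero_iff.2 hy
  have hu : ‖‖y‖⁻¹ • y‖ = 1 := by simp [norm_smul, hy']
  calc ∑ i, ⟪a i, y⟫ ^ 2 = ‖y‖ ^ 2 * ∑ i, ⟪a i, ‖y‖⁻¹ • y⟫ ^ 2 := by
        simp only [real_inner_smul_right, mul_sum]
        exact sum_congr rfl fun i _ => by field_simp
    _ ≤ ‖y‖ ^ 2 * sigmaMax a ^ 2 := by gcongr; exact sum_inner_sq_le_sigmaMax_sq a hu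
    _ = (sigmaMax a * ‖y‖) ^ 2 := by ring

lemma sum_abs_inner_le_sqrt_card_mul (S : Finset (Fin m)) (y : EuclideanSpace ℝ (Fin n)) :
    ∑ i ∈ S, |⟪a i, y⟫| ≤ √(#S : ℝ) * (sigmaMax a * ‖y‖) := by
  calc ∑ i ∈ S, |⟪a i, y⟫| = ∑ i ∈ S, 1 * |⟪a i, y⟫| := by simp
    _ ≤ √(∑ i ∈ S, 1 ^ 2) * √(∑ i ∈ S, |⟪a i, y⟫| ^ 2) :=
        Real.sum_mul_le_sqrt_mul_sqrt _ _ _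
    _ ≤ √(#S : ℝ) * √((sigmaMax a * ‖y‖) ^ 2) := by
        simp only [one_pow, sum_const, nsmul_one, sq_abs]
        gcongr
        exact (sum_le_univ_sum_of_nonneg fun _ => sq_nonneg _).trans
          (sum_inner_sq_le_sigmaMax_mul_norm_sq a y)
    _ = √(#S : ℝ) * (sigmaMax a * ‖y‖) := by
        rw [Real.sqrt_sq (mul_nonneg (sigmaMax_nonneg a) (norm_nonneg y))]

lemma sq_mul_card_le_sigmaMax_mul_norm_sq {G : Finset (Fin m)} {y : EuclideanSpace ℝ (Fin n)}
    {Q : ℝ} (hQ : 0 ≤ Q) (hG : ∀ i ∈ G, Q ≤ |⟪a i, y⟫|) :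
    Q ^ 2 * #G ≤ (sigmaMax a * ‖y‖) ^ 2 := by
  calc Q ^ 2 * #G ≤ ∑ i ∈ G, ⟪a i, y⟫ ^ 2 := by
        rw [mul_comm, ← nsmul_eq_mul]
        exact card_nsmul_le_sum _ _ _ fun i hi =>
          sq_abs ⟪a i, y⟫ ▸ pow_le_pow_left₀ hQ (hG i hi) 2
    _ ≤ ∑ i, ⟪a i, y⟫ ^ 2 := sum_le_univ_sum_of_nonneg fun _ => sq_nonneg _
    _ ≤ (sigmaMax a * ‖y‖) ^ 2 := sum_inner_sq_le_sigmaMax_mul_norm_sq a y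

lemma sq_mul_sub_mul_le_sigmaMax_mul_norm_sq {T C : Finset (Fin m)}
    {y : EuclideanSpace ℝ (Fin n)} {p β Q : ℝ} (hT : p * m ≤ #T) (hC : #C ≤ β * m)
    (hQ : 0 ≤ Q) (hTC : ∀ i ∈ T \ C, Q ≤ |⟪a i, y⟫|) :
    Q ^ 2 * ((p - β) * m) ≤ (sigmaMax a * ‖y‖) ^ 2 := by
  have hcard : (p - β) * m ≤ #(T \ C) := by
    have : (#T : ℝ) ≤ #(T \ C) + #C := by exact_mod_cast card_le_card_sdiff_add_card
    linarith
  exact (mul_le_mul_of_nonneg_left hcard (sq_nonneg Q)).trans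
    (sq_mul_card_le_sigmaMax_mul_norm_sq a hQ hTC)

end SigmaMax

lemma norm_add_smul_sub_sq_le {E : Type*} [NormedAddCommGroup E] [InnerProductSpace ℝ E]
    {a : E} (ha : ‖a‖ = 1) (xk x : E) {β Q : ℝ} (hQ : |⟪a, xk⟫ - β| ≤ Q) :
    ‖xk + (β - ⟪a, xk⟫) • a - x‖ ^ 2 ≤
      ‖xk - x‖ ^ 2 + 2 * Q * |⟪a, xk - x⟫| + Q ^ 2 := by
  set r := ⟪a, xk⟫ - β
  have hstep : xk + (β - ⟪a, xk⟫) • a - x = (xk - x) - r • a := by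
    simp only [r, sub_smul]; abel
  have hcross : -(r * ⟪a, xk - x⟫) ≤ Q * |⟪a, xk - x⟫| :=
    (neg_le_abs _).trans (abs_mul r _ ▸ mul_le_mul_of_nonneg_right hQ (abs_nonneg _))
  have hr : r ^ 2 ≤ Q ^ 2 := sq_le_sq' (neg_le_of_abs_le hQ) (le_of_abs_le hQ)
  rw [hstep, norm_sub_sq_real, inner_smul_right, norm_smul, ha, mul_one, Real.norm_eq_abs, sq_abs,
    real_inner_comm]
  nlinarith

lemma sq_add_two_mul_div_sqrt_le {c m p β Q D : ℝ} (hc : 0 < c) (hm : 0 < m) (hp : 0 < p)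
    (hQ : 0 ≤ Q) (hD : 0 ≤ D) (hQD : Q ^ 2 * (p * m) ≤ D ^ 2) (hcβ : c ≤ β * m) :
    Q ^ 2 + 2 * Q * D / √c ≤ D ^ 2 / (√c * √m) * (2 / √p + √β / p) := by
  have hk : 0 < √c := Real.sqrt_pos.2 hc
  have hM : 0 < √m := Real.sqrt_pos.2 hm
  have hu : 0 < √p := Real.sqrt_pos.2 hp
  have hkβ : √c ≤ √β * √m := Real.sqrt_mul' β hm.le ▸ Real.sqrt_le_sqrt hcβ
  have hQ' : Q ≤ D / (√p * √m) := by
    rw [le_div_iff₀ (by positivity)]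
    refine (pow_le_pow_iff_left₀ (by positivity) hD two_ne_zero).1 ?_
    rwa [mul_pow, mul_pow, Real.sq_sqrt hp.le, Real.sq_sqrt hm.le]
  calc Q ^ 2 + 2 * Q * D / √c
      ≤ (D / (√p * √m)) ^ 2 + 2 * (D / (√p * √m)) * D / √c := by
        gcongr
    _ = D ^ 2 / (√c * √m) * (2 / √p) + D ^ 2 / (p * √m * √m) := by
        field_simp
        linear_combination -D ^ 2 * √c * Real.mul_self_sqrt hp.le
    _ ≤ D ^ 2 / (√c * √m) * (2 / √p) + D ^ 2 / (√c * √m) * (√β / p) := by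
        gcongr
        rw [div_mul_div_comm, div_le_div_iff₀ (by positivity) (by positivity)]
        have := mul_le_mul_of_nonneg_left hkβ (by positivity : 0 ≤ D ^ 2 * √m * p)
        linarith
    _ = D ^ 2 / (√c * √m) * (2 / √p + √β / p) := by ring

lemma average_norm_kaczmarz_step_sub_sq_le {m n : ℕ} {a : Fin m → EuclideanSpace ℝ (Fin n)}
    (ha : ∀ i, ‖a i‖ = 1) (x xk : EuclideanSpace ℝ (Fin n)) (b : Fin m → ℝ)
    {S : Finset (Fin m)} (hS : S.Nonempty) {Q : ℝ} (hSQ : ∀ i ∈ S, |⟪a i, xk⟫ - b i| ≤ Q) :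
    (1 / #S : ℝ) * ∑ i ∈ S, ‖xk + (b i - ⟪a i, xk⟫) • a i - x‖ ^ 2 ≤
      ‖xk - x‖ ^ 2 + (Q ^ 2 + 2 * Q * (sigmaMax a * ‖xk - x‖) / √(#S : ℝ)) := by
  obtain ⟨i₀, hi₀⟩ := hS
  have hQ : 0 ≤ Q := (abs_nonneg _).trans (hSQ i₀ hi₀)
  have hS : (0 : ℝ) < #S := by exact_mod_cast card_pos.2 ⟨i₀, hi₀⟩
  set D := sigmaMax a * ‖xk - x‖
  calc (1 / #S : ℝ) * ∑ i ∈ S, ‖xk + (b i - ⟪a i, xk⟫) • a i - x‖ ^ 2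
      ≤ (1 / #S) * ∑ i ∈ S, (‖xk - x‖ ^ 2 + 2 * Q * |⟪a i, xk - x⟫| + Q ^ 2) := by
        gcongr with i hi
        exact norm_add_smul_sub_sq_le (ha i) xk x (hSQ i hi)
    _ = ‖xk - x‖ ^ 2 + (Q ^ 2 + 2 * Q * (∑ i ∈ S, |⟪a i, xk - x⟫|) / #S) := by
        rw [sum_add_distrib, sum_add_distrib, sum_const, sum_const, ← mul_sum, nsmul_eq_mul,
          nsmul_eq_mul]
        field_simp
        ring
    _ ≤ ‖xk - x‖ ^ 2 + (Q ^ 2 + 2 * Q * (√(#S : ℝ) * D) / #S) := by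
        gcongr
        exact sum_abs_inner_le_sqrt_card_mul a S (xk - x)
    _ = ‖xk - x‖ ^ 2 + (Q ^ 2 + 2 * Q * D / √(#S : ℝ)) := by
        field_simp
        linear_combination 2 * Q * D * Real.mul_self_sqrt hS.le

theorem corrupted_average_bound_general {m n : ℕ} (a : Fin m → EuclideanSpace ℝ (Fin n))
    (x xk : EuclideanSpace ℝ (Fin n)) (bt b : Fin m → ℝ) (q β Q : ℝ)
    (C : Finset (Fin m))
    (ha : ∀ i, ‖a i‖ = 1)
    (hbt : ∀ i, ⟪a i, x⟫ = bt i)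
    (hb : ∀ i ∉ C, b i = bt i)
    (hC : (C.card : ℝ) ≤ β * m)
    (hq1 : q < 1 - β)
    (hquant : (1 - q) * m ≤ ((univ.filter fun i => Q ≤ |⟪a i, xk⟫ - b i|).card : ℝ))
    (S : Finset (Fin m))
    (hSdef : S = C.filter fun i => |⟪a i, xk⟫ - b i| ≤ Q)
    (hSne : S.Nonempty) :
    (1 / S.card : ℝ) * ∑ i ∈ S, ‖xk + (b i - ⟪a i, xk⟫) • a i - x‖ ^ 2 ≤
      (1 + sigmaMax a ^ 2 / (Real.sqrt S.card * Real.sqrt m) *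
        (2 / Real.sqrt (1 - q - β) + Real.sqrt β / (1 - q - β))) * ‖xk - x‖ ^ 2 := by
  obtain ⟨i₀, hi₀⟩ := hSne
  have hSC : S ⊆ C := hSdef ▸ filter_subset _ C
  have hSQ : ∀ i ∈ S, |⟪a i, xk⟫ - b i| ≤ Q := fun i hi => by
    rw [hSdef] at hi
    exact (mem_filter.1 hi).2
  have hQ : 0 ≤ Q := (abs_nonneg _).trans (hSQ i₀ hi₀)
  have hS : (0 : ℝ) < #S := by exact_mod_cast card_pos.2 ⟨i₀, hi₀⟩
  have hm : (0 : ℝ) < m := by exact_mod_cast i₀.pos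
  have hSβ : (#S : ℝ) ≤ β * m := le_trans (by exact_mod_cast card_le_card hSC) hC
  set T := univ.filter fun i => Q ≤ |⟪a i, xk⟫ - b i|
  have hgood : ∀ i ∈ T \ C, Q ≤ |⟪a i, xk - x⟫| := fun i hi => by
    rw [inner_sub_right, hbt, ← hb i (mem_sdiff.1 hi).2]
    exact (mem_filter.1 (mem_sdiff.1 hi).1).2
  set D := sigmaMax a * ‖xk - x‖
  have hQD : Q ^ 2 * ((1 - q - β) * m) ≤ D ^ 2 :=
    sq_mul_sub_mul_le_sigmaMax_mul_norm_sq a hquant hC hQ hgood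
  calc (1 / #S : ℝ) * ∑ i ∈ S, ‖xk + (b i - ⟪a i, xk⟫) • a i - x‖ ^ 2
      ≤ ‖xk - x‖ ^ 2 + (Q ^ 2 + 2 * Q * D / √(#S : ℝ)) :=
        average_norm_kaczmarz_step_sub_sq_le ha x xk b ⟨i₀, hi₀⟩ hSQ
    _ ≤ ‖xk - x‖ ^ 2 +
          D ^ 2 / (√(#S : ℝ) * √m) * (2 / √(1 - q - β) + √β / (1 - q - β)) := by
        gcongr
        exact sq_add_two_mul_div_sqrt_le hS hm (by linarith) hQ
          (mul_nonneg (sigmaMax_nonneg a) (norm_nonneg _)) hQD hSβ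
    _ = _ := by ring

/-- Lemma 2: expected increase from corrupted equations in the
`q`-quantile. `C` indexes the corrupted equations, `Q` is the `q`-quantile of the
residuals, and `S` is the set of corrupted equations lying in the quantile. -/
theorem corrupted_average_bound {m n : ℕ} (a : Fin m → EuclideanSpace ℝ (Fin n))
    (x xk : EuclideanSpace ℝ (Fin n)) (bt b : Fin m → ℝ) (q β Q : ℝ)
    (C : Finset (Fin m))
    (ha : ∀ i, ‖a i‖ = 1)
    (hbt : ∀ i, ⟪a i, x⟫ = bt i)
    (hb : ∀ i ∉ C, b i = bt i)
    (hβ : 0 ≤ β)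
    (hC : (C.card : ℝ) ≤ β * m)
    (hq : 0 < q) (hq1 : q < 1 - β)
    (hquant : (1 - q) * m ≤ ((univ.filter fun i => Q ≤ |⟪a i, xk⟫ - b i|).card : ℝ))
    (S : Finset (Fin m))
    (hSdef : S = C.filter fun i => |⟪a i, xk⟫ - b i| ≤ Q)
    (hSne : S.Nonempty) :
    (1 / S.card : ℝ) * ∑ i ∈ S, ‖xk + (b i - ⟪a i, xk⟫) • a i - x‖ ^ 2 ≤
      (1 + sigmaMax a ^ 2 / (Real.sqrt S.card * Real.sqrt m) *
        (2 / Real.sqrt (1 - q - β) + Real.sqrt β / (1 - q - β))) * ‖xk - x‖ ^ 2 :=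
  corrupted_average_bound_general a x xk bt b q β Q C ha hbt hb hC hq1 hquant S hSdef hSne
end
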